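/- Let r ≥ 1. If n_1^{u−1} divides r_2, then cms_r(λK_{n_1,…,n_k}) = r·n_1. -/

import Mathlib

/-!
Every edge meets exactly one vertex of the first part, so if `s` cyclically consecutive edges
never raise a degree above `r`, then `s ≤ r·n₁`.

For the converse, list the edges in mixed radix, the parts `1, …, k` giving the digits from the
least significant one and the copy index the most significant one, and then subtract the digit of
part `u` from the coordinate of every larger part. The coordinate of part `b` of the `p`-th edge
becomes `v (p / C)` with `C = n₁^(b-1)` for `b ≤ u` and `C = n₁^(u-1)` for `b > u`, where `v`
never repeats a value among `n₁` consecutive arguments (for `b > u` because `n₁ < n_b`). Such a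
coordinate takes each value at most `C` times on `n₁·C` consecutive edges, hence at most `r`
times on `r·n₁` of them whenever `C ∣ r`; and `n₁^(u-1)` divides `r`, since it divides `N` and
`r₂`.
-/

/-- A hypergraph: a finite vertex type, a finite edge (label) type and an incidence
relation; distinct (parallel) edges may be incident with the same vertices. -/
structure MHypergraph where
  V : Type
  E : Type
  fintV : Fintype V
  fintE : Fintype E
  inc : E → V → Bool

namespace MHypergraph

/-- The number ε of edges of `H`. -/
def edgeCard (H : MHypergraph) : ℕ :=
  letI := H.fintE
  Fintype.card H.E

/-- The degree of a vertex: the number of edges incident with it. -/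
def degree (H : MHypergraph) (v : H.V) : ℕ :=
  letI := H.fintE
  (Finset.univ.filter (fun e => H.inc e v = true)).card

/-- The maximum degree Δ(H). -/
def maxDegree (H : MHypergraph) : ℕ :=
  letI := H.fintV
  Finset.univ.sup H.degree

/-- An ordering (labelling) of `H`, encoded by its ε-periodic enumeration:
`f i` is the edge whose label is `i % ε`; on `[ε]`, `f` is a bijection onto the
edge set. -/
structure IsOrdering (H : MHypergraph) (f : ℕ → H.E) : Prop where
  periodic : ∀ i, f (i + H.edgeCard) = f i
  inj : ∀ i j, i < H.edgeCard → j < H.edgeCard → f i = f j → i = j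
  surj : ∀ e : H.E, ∃ i, i < H.edgeCard ∧ f i = e

/-- The degree of `v` in the hypergraph `H(S)` formed (with multiplicity) by the
sequence `S` of `s` (cyclically) consecutive edges with labels `j, …, j+s-1`
taken modulo ε. -/
def windowDeg (H : MHypergraph) (f : ℕ → H.E) (j s : ℕ) (v : H.V) : ℕ :=
  ((Finset.range s).filter (fun i => H.inc (f (j + i)) v = true)).card

/-- Every sequence of `s` consecutive edges of the ordering `f` forms a hypergraph of
maximum degree at most `r`.  A window of `s` consecutive edges starts at a label `j`
with `j + s ≤ (a+1)·ε`, where `a·ε ≤ s < (a+1)·ε` (i.e. `a = s / ε`). -/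
def msOK (H : MHypergraph) (f : ℕ → H.E) (r s : ℕ) : Prop :=
  ∀ j v, j + s ≤ (s / H.edgeCard + 1) * H.edgeCard → H.windowDeg f j s v ≤ r

/-- Every sequence of `s` cyclically consecutive edges of the ordering `f` forms a
hypergraph of maximum degree at most `r`. -/
def cmsOK (H : MHypergraph) (f : ℕ → H.E) (r s : ℕ) : Prop :=
  ∀ j v, H.windowDeg f j s v ≤ r

/-- ms_r(ℓ): the largest `s` such that every `s` consecutive edges of `ℓ` form a
hypergraph of maximum degree at most `r`. -/
noncomputable def msrOf (H : MHypergraph) (f : ℕ → H.E) (r : ℕ) : ℕ :=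
  sSup {s | H.msOK f r s}

/-- cms_r(ℓ). -/
noncomputable def cmsrOf (H : MHypergraph) (f : ℕ → H.E) (r : ℕ) : ℕ :=
  sSup {s | H.cmsOK f r s}

/-- ms_r(H): the maximum of ms_r(ℓ) over all orderings ℓ of H. -/
noncomputable def msr (H : MHypergraph) (r : ℕ) : ℕ :=
  sSup {s | ∃ f, H.IsOrdering f ∧ H.msOK f r s}

/-- cms_r(H): the maximum of cms_r(ℓ) over all orderings ℓ of H. -/
noncomputable def cmsr (H : MHypergraph) (r : ℕ) : ℕ :=
  sSup {s | ∃ f, H.IsOrdering f ∧ H.cmsOK f r s}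

end MHypergraph

/-- The complete multi-k-partite k-graph λ·K_{n 0, …, n (k-1)} with edge
multiplicity `lam`: the vertex set is the disjoint union of the parts
`N_i = Fin (n i)`, and for each choice of one vertex from each part there are
`lam` parallel edges incident with exactly those `k` vertices. -/
def lamK (k lam : ℕ) (n : Fin k → ℕ) : MHypergraph where
  V := Σ i : Fin k, Fin (n i)
  E := Fin lam × (∀ i : Fin k, Fin (n i))
  fintV := inferInstance
  fintE := inferInstance
  inc := fun e v => decide (e.2 v.1 = v.2)

open Finset

def Spaced {α : Type*} (n0 : ℕ) (v : ℕ → α) : Prop :=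
  ∀ t m, 0 < m → m < n0 → v (t + m) ≠ v t

theorem spaced_mod (n0 : ℕ) : Spaced n0 (· % n0) := by
  intro t m hm hmn h
  have : n0 ∣ m := by
    simpa using (Nat.modEq_iff_dvd' (Nat.le_add_right t m)).mp h.symm
  exact absurd (Nat.le_of_dvd hm this) (by omega)

theorem Nat.add_div_mod_of_lt {t m n0 : ℕ} (hm : m < n0) :
    ((t + m) / n0 = t / n0 ∧ (t + m) % n0 = t % n0 + m) ∨
      ((t + m) / n0 = t / n0 + 1 ∧ (t + m) % n0 + n0 = t % n0 + m) := by
  have hn0 : 0 < n0 := by omega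
  have ht := Nat.div_add_mod t n0
  by_cases hc : t % n0 + m < n0
  · have e : t + m = n0 * (t / n0) + (t % n0 + m) := by omega
    left
    rw [e, Nat.mul_add_div hn0, Nat.mul_add_mod, Nat.div_eq_of_lt hc, Nat.mod_eq_of_lt hc]
    simp
  · have e : t + m = n0 * (t / n0 + 1) + (t % n0 + m - n0) := by rw [mul_add]; omega
    have hc' : t % n0 + m - n0 < n0 := by have := Nat.mod_lt t hn0; omega
    right
    rw [e, Nat.mul_add_div hn0, Nat.mul_add_mod, Nat.div_eq_of_lt hc', Nat.mod_eq_of_lt hc']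
    omega

theorem Int.natCast_dvd_sub_sub_of_mod_eq {n a a' b b' : ℕ} (hn : 0 < n)
    (h : (a + (n - 1) * b) % n = (a' + (n - 1) * b') % n) :
    (n : ℤ) ∣ ((a : ℤ) - a') - ((b : ℤ) - b') := by
  have hmod := Nat.modEq_iff_dvd.mp h
  push_cast [Nat.cast_sub hn] at hmod
  rw [show ((a : ℤ) - a') - ((b : ℤ) - b') =
    n * (b' - b) - (a' + (n - 1) * b' - (a + (n - 1) * b)) by ring]
  exact dvd_sub (dvd_mul_right _ _) hmod

theorem spaced_shear {n0 n : ℕ} (hn : n0 < n) (W : ℕ) :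
    Spaced n0 fun t => (t / (n0 * W) + (n - 1) * (t % n0)) % n := by
  intro t m hm hmn h
  simp only [← Nat.div_div_eq_div_mul] at h
  have hdvd := Int.natCast_dvd_sub_sub_of_mod_eq (by omega) h
  have hstep := Nat.succ_div (a := t / n0) (b := W)
  -- Within a block of `n0` each step lowers the value by one mod `n`; the step into the next
  -- block raises `t / n0 / W` by at most one. So `m` steps change the value by `-m`, `n0 - m`
  -- or `n0 - m + 1` mod `n`, and none of these is divisible by `n > n0`.
  rcases Nat.add_div_mod_of_lt (t := t) hmn with ⟨hq, hr⟩ | ⟨hq, hr⟩ <;> rw [hq] at hdvd <;>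
    split_ifs at hstep <;>
    · have := Int.eq_zero_of_abs_lt_dvd hdvd (by rw [abs_lt]; omega)
      omega

namespace Spaced

variable {α : Type*} {n0 : ℕ} {v : ℕ → α}

theorem ne_of_lt (hv : Spaced n0 v) {C j i i' : ℕ} (hi : i < i') (hgap : i' < i + n0 * C)
    (hres : (j + i) % C = (j + i') % C) : v ((j + i') / C) ≠ v ((j + i) / C) := by
  have hC : 0 < C := Nat.pos_of_ne_zero fun h => by
    rw [h, Nat.mod_zero, Nat.mod_zero] at hres; omega
  obtain ⟨m, hm⟩ : C ∣ i' - i := by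
    simpa [Nat.add_sub_add_left] using
      (Nat.modEq_iff_dvd' (by omega : j + i ≤ j + i')).mp hres
  have hq : (j + i') / C = (j + i) / C + m := by
    rw [show j + i' = j + i + C * m by omega, Nat.add_mul_div_left _ _ hC]
  rw [hq]
  refine hv _ m (Nat.pos_of_ne_zero fun h0 => ?_) (Nat.lt_of_mul_lt_mul_left (a := C) ?_)
  · rw [h0, mul_zero] at hm; omega
  · rw [← hm, mul_comm]; omega

theorem card_filter_le [DecidableEq α] (hv : Spaced n0 v) (a : α) (C j R : ℕ) :
    #{i ∈ range (R * (n0 * C)) | v ((j + i) / C) = a} ≤ R * C := by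
  -- Two positions in the same block of length `n0 * C` with the same residue mod `C` are
  -- a positive multiple of `C`, but fewer than `n0` blocks of `C`, apart.
  have hinj : ∀ i i', i < i' → i' < R * (n0 * C) → i / (n0 * C) = i' / (n0 * C) →
      (j + i) % C = (j + i') % C → v ((j + i') / C) ≠ v ((j + i) / C) := by
    intro i i' hi hi' hblock hres
    refine hv.ne_of_lt hi ?_ hres
    have hB : 0 < n0 * C := Nat.pos_of_ne_zero fun h => by rw [h, mul_zero] at hi'; omega
    have h1 := Nat.lt_div_mul_add (a := i') hB
    have h2 := Nat.div_mul_le_self i (n0 * C)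
    rw [← hblock] at h1
    omega
  calc #{i ∈ range (R * (n0 * C)) | v ((j + i) / C) = a}
      ≤ #(range R ×ˢ range C) := by
        refine card_le_card_of_injOn (fun i => (i / (n0 * C), (j + i) % C)) ?_ ?_
        · intro i hi
          simp only [coe_filter, mem_range, Set.mem_ofPred_eq] at hi
          have hB : 0 < n0 * C := Nat.pos_of_ne_zero fun h => by rw [h, mul_zero] at hi; omega
          simp only [coe_product, coe_range, Set.mem_prod, Set.mem_Iio]
          exact ⟨Nat.div_lt_of_lt_mul (by rw [mul_comm]; exact hi.1),
            Nat.mod_lt _ (Nat.pos_of_mul_pos_left hB)⟩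
        · intro i hi i' hi' heq
          simp only [coe_filter, mem_range, Set.mem_ofPred_eq, Prod.mk.injEq] at hi hi' heq
          by_contra hne
          rcases Nat.lt_or_gt_of_ne hne with h | h
          · exact hinj i i' h hi'.1 heq.1 heq.2 (hi'.2.trans hi.2.symm)
          · exact hinj i' i h hi.1 heq.1.symm heq.2.symm (hi.2.trans hi'.2.symm)
    _ = R * C := by simp

end Spaced

namespace MHypergraph

variable (H : MHypergraph)

theorem isOrdering_of_equiv {m : ℕ} (e : Fin m ≃ H.E) (hm : 0 < m) :
    H.IsOrdering fun p => e ⟨p % m, Nat.mod_lt p hm⟩ := by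
  have hcard : H.edgeCard = m := by
    let := H.fintE
    exact (Fintype.card_congr e).symm.trans (Fintype.card_fin m)
  constructor
  · intro p
    simp [hcard]
  · intro p q hp hq hpq
    rw [hcard] at hp hq
    simpa [Nat.mod_eq_of_lt hp, Nat.mod_eq_of_lt hq] using hpq
  · intro x
    exact ⟨e.symm x, hcard ▸ (e.symm x).isLt, by simp [Nat.mod_eq_of_lt (e.symm x).isLt]⟩

variable {H}

theorem cmsOK.le_mul_card {f : ℕ → H.E} {r s : ℕ} (hf : H.cmsOK f r s) (S : Finset H.V)
    (hS : ∀ e, ∃ v ∈ S, H.inc e v = true) : s ≤ r * #S := by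
  classical
  calc s = #(range s) := (card_range s).symm
    _ ≤ #(S.biUnion fun v => {i ∈ range s | H.inc (f i) v = true}) := by
        refine card_le_card fun i hi => ?_
        obtain ⟨v, hv, hinc⟩ := hS (f i)
        exact mem_biUnion.mpr ⟨v, hv, mem_filter.mpr ⟨hi, hinc⟩⟩
    _ ≤ ∑ v ∈ S, #{i ∈ range s | H.inc (f i) v = true} := card_biUnion_le
    _ ≤ ∑ _v ∈ S, r := sum_le_sum fun v _ => by simpa [windowDeg] using hf 0 v
    _ = r * #S := by rw [sum_const, smul_eq_mul, mul_comm]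

end MHypergraph

theorem Nat.mod_div_mod_of_mul_dvd {p P m M : ℕ} (h : P * m ∣ M) :
    p % M / P % m = p / P % m := by
  obtain ⟨t, rfl⟩ := h
  rw [mul_assoc, Nat.mod_mul_right_div_self, Nat.mod_mul_right_mod]

section lamK

variable {k : ℕ} (n : Fin k → ℕ)

def partSize (j : ℕ) : ℕ := if h : j < k then n ⟨j, h⟩ else 1

def placeValue (b : ℕ) : ℕ := ∏ j ∈ range b, partSize n j

theorem prod_eq_placeValue : ∏ i, n i = placeValue n k := by
  rw [placeValue, ← Fin.prod_univ_eq_prod_range]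
  simp [partSize]

theorem placeValue_dvd {a b : ℕ} (h : a ≤ b) : placeValue n a ∣ placeValue n b :=
  prod_dvd_prod_of_subset _ _ _ (range_subset_range.mpr h)

theorem placeValue_succ (b : Fin k) : placeValue n (b + 1) = placeValue n b * n b := by
  simp [placeValue, prod_range_succ, partSize]

theorem placeValue_eq_pow {c : Fin k} (hlow : ∀ i ≤ c, n i = n c) {b : ℕ} (hb : b ≤ c + 1) :
    placeValue n b = n c ^ b := by
  rw [placeValue, prod_congr rfl (g := fun _ => n c), prod_const, card_range]
  intro j hj
  rw [mem_range] at hj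
  simp only [partSize, show j < k by omega, dif_pos]
  exact hlow _ (Fin.mk_le_of_le_val (by omega))

theorem finPiFinEquiv_symm_apply_val (x : Fin (∏ i, n i)) (b : Fin k) :
    (finPiFinEquiv.symm x b : ℕ) = x / placeValue n b % n b := by
  rw [placeValue, ← Fin.prod_univ_eq_prod_range]
  simp only [finPiFinEquiv, Equiv.ofRightInverseOfCardLE_symm_apply]
  congr 2
  exact prod_congr rfl fun j _ => by simp [partSize, Fin.castLE, show (j : ℕ) < k by omega]

-- `(n i - 1) * x c` is `-x c` mod `n i`, written without truncated subtraction.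
def shear (c : Fin k) (x : ∀ i, Fin (n i)) (i : Fin k) : Fin (n i) :=
  if c < i then ⟨(x i + (n i - 1) * x c) % n i, Nat.mod_lt _ (x i).pos⟩ else x i

theorem shear_injective (c : Fin k) : Function.Injective (shear n c) := by
  intro x y h
  have hc : x c = y c := by simpa [shear] using congrFun h c
  funext i
  have hi := congrFun h i
  by_cases hci : c < i
  · simp only [shear, hci, if_true, Fin.mk.injEq, hc] at hi
    have := Nat.ModEq.add_right_cancel' _ hi
    exact Fin.ext (by
      simpa [Nat.ModEq, Nat.mod_eq_of_lt (x i).isLt, Nat.mod_eq_of_lt (y i).isLt] using this)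
  · simpa [shear, hci] using hi

noncomputable def lamKEquiv (lam : ℕ) (c : Fin k) : Fin (lam * ∏ i, n i) ≃ (lamK k lam n).E :=
  finProdFinEquiv.symm.trans <| Equiv.prodCongr (Equiv.refl _) <|
    finPiFinEquiv.symm.trans <|
      Equiv.ofBijective _ (Finite.injective_iff_bijective.mp (shear_injective n c))

theorem lamKEquiv_mod_apply_val {lam : ℕ} (c : Fin k) (hε : 0 < lam * ∏ i, n i) (p : ℕ)
    (b : Fin k) :
    ((lamKEquiv n lam c ⟨p % (lam * ∏ i, n i), Nat.mod_lt _ hε⟩).2 b : ℕ) =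
      if c < b then (p / placeValue n b + (n b - 1) * (p / placeValue n c % n c)) % n b
      else p / placeValue n b % n b := by
  have hdigit : ∀ b : Fin k, p % (lam * ∏ i, n i) % (∏ i, n i) / placeValue n b % n b =
      p / placeValue n b % n b := fun b => by
    rw [Nat.mod_mul_left_mod]
    refine Nat.mod_div_mod_of_mul_dvd ?_
    rw [← placeValue_succ, prod_eq_placeValue]
    exact placeValue_dvd n b.isLt
  change (shear n c (finPiFinEquiv.symm (finProdFinEquiv.symm _).2) b : ℕ) = _
  by_cases hcb : c < b <;>
    simp only [shear, hcb, if_true, if_false, finPiFinEquiv_symm_apply_val,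
      finProdFinEquiv_symm_apply, Fin.coe_modNat, hdigit, Nat.mod_add_mod]

end lamK

section lamKBounds

variable {k lam : ℕ} (n : Fin k → ℕ)

theorem lamK_windowDeg_le {f : ℕ → (lamK k lam n).E} {b : Fin k} (a : Fin (n b))
    {n0 C : ℕ} {v : ℕ → ℕ} (hv : Spaced n0 v) (hf : ∀ p, ((f p).2 b : ℕ) = v (p / C))
    (j R : ℕ) : (lamK k lam n).windowDeg f j (R * (n0 * C)) ⟨b, a⟩ ≤ R * C := by
  have hinc : ∀ i, (lamK k lam n).inc (f (j + i)) ⟨b, a⟩ = true ↔ v ((j + i) / C) = a :=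
    fun i => by simp [lamK, ← hf, Fin.ext_iff]
  simpa only [MHypergraph.windowDeg, hinc] using hv.card_filter_le (a : ℕ) C j R

theorem lamK_exists_cmsOK (hlam : 0 < lam) (hpos : ∀ i, 0 < n i) (c : Fin k)
    (hlow : ∀ i ≤ c, n i = n c) (hhigh : ∀ i, c < i → n c < n i) {r : ℕ}
    (hr : n c ^ (c : ℕ) ∣ r) :
    ∃ f, (lamK k lam n).IsOrdering f ∧ (lamK k lam n).cmsOK f r (r * n c) := by
  have hε : 0 < lam * ∏ i, n i := Nat.mul_pos hlam (prod_pos fun i _ => hpos i)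
  refine ⟨_, (lamK k lam n).isOrdering_of_equiv (lamKEquiv n lam c) hε, ?_⟩
  rintro j ⟨b, a⟩
  have hval := lamKEquiv_mod_apply_val n c hε
  by_cases hcb : c < b
  · obtain ⟨W, hW⟩ : n c ^ ((c : ℕ) + 1) ∣ placeValue n b :=
      placeValue_eq_pow n hlow le_rfl ▸ placeValue_dvd n hcb
    obtain ⟨R, hR⟩ := hr
    have := lamK_windowDeg_le n a (spaced_shear (hhigh b hcb) W) (C := n c ^ (c : ℕ))
      (fun p => by rw [hval, if_pos hcb, hW, pow_succ, mul_assoc, ← Nat.div_div_eq_div_mul,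
        placeValue_eq_pow n hlow (Nat.le_succ _)]) j R
    rwa [show r * n c = R * (n c * n c ^ (c : ℕ)) by rw [hR]; ring,
      show r = R * n c ^ (c : ℕ) by rw [hR]; ring]
  · have hb : b ≤ c := not_lt.mp hcb
    obtain ⟨R, hR⟩ : n c ^ (b : ℕ) ∣ r := (pow_dvd_pow _ hb).trans hr
    have := lamK_windowDeg_le n a (spaced_mod (n c)) (C := n c ^ (b : ℕ))
      (fun p => by rw [hval, if_neg hcb, placeValue_eq_pow n hlow (by omega), hlow b hb]) j R
    rwa [show r * n c = R * (n c * n c ^ (b : ℕ)) by rw [hR]; ring,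
      show r = R * n c ^ (b : ℕ) by rw [hR]; ring]

theorem lamK_cmsOK_le {f : ℕ → (lamK k lam n).E} {r s : ℕ} (hf : (lamK k lam n).cmsOK f r s)
    (i : Fin k) : s ≤ r * n i := by
  let S : Finset (Σ i, Fin (n i)) := univ.map (Function.Embedding.sigmaMk i)
  have := hf.le_mul_card S fun e =>
    ⟨⟨i, e.2 i⟩, mem_map_of_mem _ (mem_univ _), by simp [lamK]⟩
  have hS : #S = n i := by simp [S]
  exact hS ▸ this

end lamKBounds

theorem pow_dvd_prod_erase {k : ℕ} {n : Fin k → ℕ} (hpos : ∀ i, 0 < n i) {c : Fin k}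
    (hlow : ∀ i ≤ c, n i = n c) {i₀ : Fin k} (hi₀ : i₀ ≤ c) :
    n c ^ (c : ℕ) ∣ ∏ i ∈ univ.erase i₀, n i := by
  refine Nat.dvd_of_mul_dvd_mul_left (hpos c) ?_
  rw [← pow_succ', ← placeValue_eq_pow n hlow le_rfl, ← hlow i₀ hi₀,
    mul_prod_erase _ _ (mem_univ _), prod_eq_placeValue]
  exact placeValue_dvd n c.isLt

/-- Lemma: if `n_1^(u-1) ∣ r_2` then `cms_r(λK_{n_1,…,n_k}) = r·n_1`. -/
theorem cms_eq_of_dvd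
    (k lam u : ℕ) (n : Fin k → ℕ)
    (hlam : 1 ≤ lam)
    (hu1 : 1 ≤ u) (huk : u ≤ k)
    (hpos : ∀ i, 1 ≤ n i)
    (heq : ∀ i : Fin k, (i : ℕ) < u → n i = n ⟨0, by omega⟩)
    (hlt : ∀ i : Fin k, u ≤ (i : ℕ) → n ⟨0, by omega⟩ < n i)
    (N : ℕ)
    (hN : N = ∏ i ∈ Finset.univ.filter (fun i : Fin k => (i : ℕ) ≠ 0), n i)
    (r r1 r2 : ℕ)
    (hrdec : r = r1 * (lam * N) + r2)
    (hdvd : (n ⟨0, by omega⟩) ^ (u - 1) ∣ r2) :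
    (lamK k lam n).cmsr r = r * n ⟨0, by omega⟩ := by
  let c : Fin k := ⟨u - 1, by omega⟩
  have hc : n c = n ⟨0, by omega⟩ := heq c (by simp [c]; omega)
  have hlow : ∀ i ≤ c, n i = n c := fun i hi =>
    (heq i (by rw [Fin.le_def] at hi; simp only [c] at hi; omega)).trans hc.symm
  have hhigh : ∀ i, c < i → n c < n i := fun i hi =>
    hc ▸ hlt i (by rw [Fin.lt_def] at hi; simp only [c] at hi; omega)
  have hNdvd : n c ^ (c : ℕ) ∣ N := by
    rw [hN, show univ.filter (fun i : Fin k => (i : ℕ) ≠ 0) = univ.erase ⟨0, by omega⟩ by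
      ext; simp [Fin.ext_iff]]
    exact pow_dvd_prod_erase hpos hlow (Fin.mk_le_mk.mpr (Nat.zero_le _))
  have hr : n c ^ (c : ℕ) ∣ r :=
    hrdec ▸ dvd_add (dvd_mul_of_dvd_right (hNdvd.mul_left lam) r1) (hc ▸ hdvd)
  obtain ⟨f, hford, hf⟩ := lamK_exists_cmsOK n hlam hpos c hlow hhigh hr
  rw [← hc]
  exact IsGreatest.csSup_eq ⟨⟨f, hford, hf⟩, fun s ⟨_, _, hf'⟩ => lamK_cmsOK_le n hf' c⟩
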